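/- arXiv:2409.01820 — 3 statements merged into one kernel-verified Lean document; each statement's English description precedes it below -/
import Mathlib

section
/- Let $h, m$ be positive integers, let $P, P_1$ be $h\times h$ complex matrices and $\tilde{B}_1$ an $h\times m$ complex matrix. If the controllable subspace of $(P, P_1, \tilde{B}_1)$ is all of $\mathbb{C}^h$, then for every pair $s, s_1 \in \mathbb{C}$ the $h \times (2h + m)$ block matrix $\begin{pmatrix} sI_h - P & s_1 I_h - P_1 & \tilde{B}_1 \end{pmatrix}$ has rank $h$. -/
/-!
The range `S` of the block matrix `(sI - P  s₁I - P₁  B̃₁)` contains the columns of `B̃₁`, and it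
is invariant under `P` and `P₁`, because `P v = s v - (sI - P) v` and `(sI - P) v ∈ S`. Hence `S`
contains the controllable subspace, which is all of `ℂ^h`, so the matrix has rank `h`.
-/

/-- The controllable subspace of `(P, P₁, B)`: the span of the columns of all matrices
`W * B`, where `W` ranges over all finite products (words) of factors from `{P, P₁}`,
including the empty product `W = I`. -/
noncomputable def ctrlSubspace {h m : ℕ} (P P₁ : Matrix (Fin h) (Fin h) ℂ)
    (B : Matrix (Fin h) (Fin m) ℂ) : Submodule ℂ (Fin h → ℂ) :=
  Submodule.span ℂ
    {v | ∃ L : List (Matrix (Fin h) (Fin h) ℂ),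
      (∀ M ∈ L, M = P ∨ M = P₁) ∧ ∃ j : Fin m, v = fun i => (L.prod * B) i j}

open Matrix

namespace Matrix

variable {m n₁ n₂ R : Type*} [CommSemiring R] [Fintype n₁] [Fintype n₂]

lemma range_mulVecLin_le_fromCols_left (A₁ : Matrix m n₁ R) (A₂ : Matrix m n₂ R) :
    LinearMap.range A₁.mulVecLin ≤ LinearMap.range (fromCols A₁ A₂).mulVecLin := by
  rintro _ ⟨v, rfl⟩
  exact ⟨Sum.elim v 0, by simp⟩

lemma range_mulVecLin_le_fromCols_right (A₁ : Matrix m n₁ R) (A₂ : Matrix m n₂ R) :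
    LinearMap.range A₂.mulVecLin ≤ LinearMap.range (fromCols A₁ A₂).mulVecLin := by
  rintro _ ⟨v, rfl⟩
  exact ⟨Sum.elim 0 v, by simp⟩

end Matrix

section Invariance

variable {n R : Type*} [Fintype n] [DecidableEq n] [CommRing R] {S : Submodule R (n → R)}

lemma Matrix.mulVec_mem_of_range_smul_one_sub_le {P : Matrix n n R} {s : R}
    (hS : LinearMap.range (s • 1 - P).mulVecLin ≤ S) {v : n → R} (hv : v ∈ S) :
    P *ᵥ v ∈ S := by
  have hPv : P *ᵥ v = s • v - (s • 1 - P) *ᵥ v := by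
    rw [sub_mulVec, smul_mulVec, one_mulVec, sub_sub_cancel]
  rw [hPv]
  exact S.sub_mem (S.smul_mem s hv) (hS ⟨v, rfl⟩)

lemma List.prod_mulVec_mem {L : List (Matrix n n R)} (hL : ∀ M ∈ L, ∀ v ∈ S, M *ᵥ v ∈ S)
    {v : n → R} (hv : v ∈ S) : L.prod *ᵥ v ∈ S := by
  induction L with
  | nil => simpa using hv
  | cons M L ih =>
    rw [List.prod_cons, ← mulVec_mulVec]
    exact hL M List.mem_cons_self _ (ih fun M' hM' => hL M' (List.mem_cons_of_mem M hM'))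

end Invariance

lemma ctrlSubspace_le {h m : ℕ} {P P₁ : Matrix (Fin h) (Fin h) ℂ} {B : Matrix (Fin h) (Fin m) ℂ}
    {S : Submodule ℂ (Fin h → ℂ)} (hB : LinearMap.range B.mulVecLin ≤ S)
    (hP : ∀ v ∈ S, P *ᵥ v ∈ S) (hP₁ : ∀ v ∈ S, P₁ *ᵥ v ∈ S) :
    ctrlSubspace P P₁ B ≤ S := by
  rw [ctrlSubspace, Submodule.span_le]
  rintro _ ⟨L, hL, j, rfl⟩
  change (L.prod * B).col j ∈ S
  rw [← mulVec_single_one, ← mulVec_mulVec]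
  refine List.prod_mulVec_mem (fun M hM => ?_) (hB ⟨_, rfl⟩)
  rcases hL M hM with rfl | rfl
  exacts [hP, hP₁]

theorem pbh_rank_of_controllable_general (h m : ℕ)
    (P P₁ : Matrix (Fin h) (Fin h) ℂ) (Btilde₁ : Matrix (Fin h) (Fin m) ℂ)
    (hctrl : ctrlSubspace P P₁ Btilde₁ = ⊤) :
    ∀ s s₁ : ℂ,
      (Matrix.fromCols (s • (1 : Matrix (Fin h) (Fin h) ℂ) - P)
        (Matrix.fromCols (s₁ • (1 : Matrix (Fin h) (Fin h) ℂ) - P₁) Btilde₁)).rank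
        = h := by
  intro s s₁
  set S := LinearMap.range
    (fromCols (s • (1 : Matrix (Fin h) (Fin h) ℂ) - P) (fromCols (s₁ • 1 - P₁) Btilde₁)).mulVecLin
  have hP : LinearMap.range (s • 1 - P).mulVecLin ≤ S := range_mulVecLin_le_fromCols_left _ _
  have hP₁ : LinearMap.range (s₁ • 1 - P₁).mulVecLin ≤ S :=
    (range_mulVecLin_le_fromCols_left _ _).trans (range_mulVecLin_le_fromCols_right _ _)
  have hB : LinearMap.range Btilde₁.mulVecLin ≤ S :=
    (range_mulVecLin_le_fromCols_right _ _).trans (range_mulVecLin_le_fromCols_right _ _)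
  have hS : S = ⊤ := top_unique <| hctrl ▸ ctrlSubspace_le hB
    (fun _ => mulVec_mem_of_range_smul_one_sub_le hP)
    (fun _ => mulVec_mem_of_range_smul_one_sub_le hP₁)
  change Module.finrank ℂ S = h
  rw [hS, finrank_top, Module.finrank_fin_fun]

/-- **PBH rank condition from exact controllability.**
If the controllable subspace of `(P, P₁, B̃₁)` is all of `ℂ^h`, then for every
`s, s₁ ∈ ℂ` the block matrix `(sI - P  s₁I - P₁  B̃₁)` has rank `h`. -/
theorem pbh_rank_of_controllable (h m : ℕ) (hh : 0 < h) (hm : 0 < m)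
    (P P₁ : Matrix (Fin h) (Fin h) ℂ) (Btilde₁ : Matrix (Fin h) (Fin m) ℂ)
    (hctrl : ctrlSubspace P P₁ Btilde₁ = ⊤) :
    ∀ s s₁ : ℂ,
      (Matrix.fromCols (s • (1 : Matrix (Fin h) (Fin h) ℂ) - P)
        (Matrix.fromCols (s₁ • (1 : Matrix (Fin h) (Fin h) ℂ) - P₁) Btilde₁)).rank
        = h :=
  pbh_rank_of_controllable_general h m P P₁ Btilde₁ hctrl
end

section
/- Let $n, r$ be positive integers and $h \le n$. Let $N_1 \in \mathbb{R}^{n\times n}$ be invertible, $K \in \mathbb{R}^{r\times n}$, $B_2 \in \mathbb{R}^{(n-h)\times r}$, let $Q \in \mathbb{R}^{n\times n}$ be symmetric positive semidefinite, let $R \in \mathbb{R}^{r\times r}$ be symmetric positive definite, and assume that the $r\times r$ matrix $I_r + KN_1\begin{pmatrix} 0_{h\times r} \\ -B_2 \end{pmatrix}$ has rank $r$ (i.e. is invertible). Define $X_1 = \begin{pmatrix} N_1 & 0 \\ KN_1 & I_r \end{pmatrix}$ (an $(n+r)\times(n+r)$ matrix) and $X_2 = \begin{pmatrix} I_h & 0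 \\ 0 & -B_2 \\ 0 & I_r \end{pmatrix}$ (an $(n+r)\times(h+r)$ matrix with row blocks of sizes $h$, $n-h$, $r$ and column blocks of sizes $h$, $r$), and set $M = X_2^{\mathrm{T}} X_1^{\mathrm{T}} \,\mathrm{diag}(Q, R)\, X_1 X_2 = \begin{pmatrix} \hat{Q} & S^{\mathrm{T}} \\ S & \hat{R} \end{pmatrix}$, where $\hat{Q} \in \mathbb{R}^{h\times h}$, $S \in \mathbb{R}^{r\times h}$, $\hat{R} \in \mathbb{R}^{r\times r}$. Then: (i) $\hat{R} = \begin{pmatrix} 0 & -B_2^{\mathrm{T}} \end{pmatrix} N_1^{\mathrm{T}} Q N_1 \begin{pmatrix} 0 \\ -B_2 \end{pmatrix} + \left(I_r + KN_1\begin{pmatrix} 0 \\ -B_2 \end{pmatrix}\right)^{\mathrm{T}} R \left(I_r + KN_1\begin{pmatrix} 0 \\ -B_2 \end{pmatrix}\right)$; (ii) $\hat{R}$ is positive definite; and (iii) $\tilde{Q} := \hat{Q} - S^{\mathrm{T}}\hat{R}^{-1}S$ is positive semidefinite. -/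
open Matrix

/-! Writing `P = [[I_h], [0]]` for the upper left block of `X₂`, we have
`Y = X₁ X₂ = [[N₁ P, N₁ J], [K N₁ P, I + K N₁ J]]`, and `M = Yᵀ diag(Q, R) Y` is
a Gram matrix of the positive semidefinite `diag(Q, R)`, so it is positive semidefinite, and its
lower right block is `(N₁ J)ᵀ Q (N₁ J) + Cᵀ R C` with `C = I + K N₁ J`. Since `C` is invertible
and `R > 0`, the second summand is positive definite, hence so is `R̂`; positive semidefiniteness
of `M` together with `R̂ > 0` is then equivalent to that of the Schur complement `Q̂ - Sᵀ R̂⁻¹ S`. -/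

namespace Matrix

theorem isUnit_of_rank_eq_card {K n : Type*} [Field K] [Fintype n] [DecidableEq n]
    {A : Matrix n n K} (hA : A.rank = Fintype.card n) : IsUnit A := by
  have hsurj : Function.Surjective A.mulVecLin := by
    rw [← LinearMap.range_eq_top]
    apply Submodule.eq_top_of_finrank_eq
    simpa [Matrix.rank] using hA
  exact mulVec_injective_iff_isUnit.mp (LinearMap.injective_iff_surjective.mpr hsurj)

theorem toBlocks₂₂_transpose_mul_fromBlocks_zero_mul {α l m n o : Type*} [CommRing α]
    [Fintype l] [Fintype m] (A : Matrix l n α) (B : Matrix l o α) (C : Matrix m n α)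
    (D : Matrix m o α) (Q : Matrix l l α) (R : Matrix m m α) :
    ((fromBlocks A B C D)ᵀ * fromBlocks Q 0 0 R * fromBlocks A B C D).toBlocks₂₂ =
      Bᵀ * Q * B + Dᵀ * R * D := by
  simp [fromBlocks_transpose, fromBlocks_multiply]

theorem IsHermitian.toBlocks₂₁_eq {α m n : Type*} [Star α] {M : Matrix (m ⊕ n) (m ⊕ n) α}
    (hM : M.IsHermitian) : M.toBlocks₂₁ = M.toBlocks₁₂ᴴ := by
  ext i j
  exact (hM.apply _ _).symm

section PosSemidef

variable {R m n : Type*} [Fintype m] [Fintype n]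

theorem PosSemidef.fromBlocks_zero [CommRing R] [PartialOrder R] [StarRing R]
    [IsOrderedAddMonoid R] {A : Matrix m m R} {D : Matrix n n R}
    (hA : A.PosSemidef) (hD : D.PosSemidef) : (fromBlocks A 0 0 D).PosSemidef := by
  refine posSemidef_iff_dotProduct_mulVec.mpr ⟨hA.1.fromBlocks (by simp) hD.1, fun x => ?_⟩
  rw [← Sum.elim_comp_inl_inr x, fromBlocks_mulVec, Function.star_sumElim]
  simp only [Sum.elim_comp_inl, Sum.elim_comp_inr, zero_mulVec, add_zero, zero_add,
    sumElim_dotProduct_sumElim]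
  exact add_nonneg (hA.dotProduct_mulVec_nonneg _) (hD.dotProduct_mulVec_nonneg _)

theorem PosSemidef.schur_complement_toBlocks₂₂ [Field R] [PartialOrder R] [StarRing R]
    [StarOrderedRing R] [DecidableEq n] {M : Matrix (m ⊕ n) (m ⊕ n) R}
    (hM : M.PosSemidef) (hD : M.toBlocks₂₂.PosDef) :
    (M.toBlocks₁₁ - M.toBlocks₁₂ * M.toBlocks₂₂⁻¹ * M.toBlocks₂₁).PosSemidef := by
  have := hD.isUnit.invertible
  rw [hM.1.toBlocks₂₁_eq, ← PosDef.fromBlocks₂₂ _ _ hD, ← hM.1.toBlocks₂₁_eq,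
    fromBlocks_toBlocks]
  exact hM

end PosSemidef

end Matrix

/-- **Positive definiteness of `R̂` in the semidefinite case.**
With `N₁` invertible, `Q ≥ 0`, `R > 0`, `J = [[0], [-B₂]]` the `n × r` matrix whose
first `h` rows vanish, and `I_r + K N₁ J` of rank `r`, setting
`X₁ = [[N₁, 0], [K N₁, I_r]]`, `X₂ = [[I_h, 0], [0, -B₂], [0, I_r]]` and
`M = X₂ᵀ X₁ᵀ diag(Q, R) X₁ X₂ = [[Q̂, Sᵀ], [S, R̂]]`, one has
(i) `R̂ = Jᵀ N₁ᵀ Q N₁ J + (I_r + K N₁ J)ᵀ R (I_r + K N₁ J)`,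
(ii) `R̂ > 0`, and (iii) `Q̃ = Q̂ - Sᵀ R̂⁻¹ S ≥ 0`. -/
theorem transformed_cost_posSemidef (n r h : ℕ) (hn : h ≤ n)
    (N₁ : Matrix (Fin n) (Fin n) ℝ)
    (K : Matrix (Fin r) (Fin n) ℝ) (B₂ : Matrix (Fin (n - h)) (Fin r) ℝ)
    (Q : Matrix (Fin n) (Fin n) ℝ) (R : Matrix (Fin r) (Fin r) ℝ)
    (hQ : Q.PosSemidef) (hR : R.PosDef) :
    ∀ (e : Fin h ⊕ Fin (n - h) ≃ Fin n), e = finSumFinEquiv.trans (finCongr (by omega)) →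
    ∀ (J : Matrix (Fin n) (Fin r) ℝ),
      J = (fromRows (0 : Matrix (Fin h) (Fin r) ℝ) (-B₂)).submatrix e.symm id →
    (1 + K * N₁ * J).rank = r →
    ∀ (X₁ : Matrix (Fin n ⊕ Fin r) (Fin n ⊕ Fin r) ℝ),
      X₁ = fromBlocks N₁ 0 (K * N₁) 1 →
    ∀ (X₂ : Matrix (Fin n ⊕ Fin r) (Fin h ⊕ Fin r) ℝ),
      X₂ = fromBlocks
        ((fromRows (1 : Matrix (Fin h) (Fin h) ℝ)
          (0 : Matrix (Fin (n - h)) (Fin h) ℝ)).submatrix e.symm id)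
        J 0 1 →
    ∀ (M : Matrix (Fin h ⊕ Fin r) (Fin h ⊕ Fin r) ℝ),
      M = X₂ᵀ * X₁ᵀ * fromBlocks Q 0 0 R * X₁ * X₂ →
      M.toBlocks₂₂ =
          Jᵀ * N₁ᵀ * Q * N₁ * J + (1 + K * N₁ * J)ᵀ * R * (1 + K * N₁ * J) ∧
        (M.toBlocks₂₂).PosDef ∧
        (M.toBlocks₁₁ - M.toBlocks₁₂ * (M.toBlocks₂₂)⁻¹ * M.toBlocks₂₁).PosSemidef := by
  intro e _ J _ hrank X₁ hX₁ X₂ hX₂ M hM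
  set P := (fromRows (1 : Matrix (Fin h) (Fin h) ℝ) (0 : Matrix (Fin (n - h)) (Fin h) ℝ)).submatrix
    e.symm id
  set C := 1 + K * N₁ * J
  have hY : X₁ * X₂ = fromBlocks (N₁ * P) (N₁ * J) (K * N₁ * P) C := by
    simp [hX₁, hX₂, fromBlocks_multiply, C, add_comm]
  have hMY : M = (X₁ * X₂)ᴴ * fromBlocks Q 0 0 R * (X₁ * X₂) := by
    simp only [hM, conjTranspose_eq_transpose_of_trivial, transpose_mul, Matrix.mul_assoc]
  have hRhat : M.toBlocks₂₂ = Jᵀ * N₁ᵀ * Q * N₁ * J + Cᵀ * R * C := by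
    rw [hMY, hY, conjTranspose_eq_transpose_of_trivial,
      toBlocks₂₂_transpose_mul_fromBlocks_zero_mul, transpose_mul]
    simp only [Matrix.mul_assoc]
  have hC : Function.Injective C.mulVec :=
    mulVec_injective_iff_isUnit.mpr (isUnit_of_rank_eq_card (by simpa using hrank))
  have hRhat_posDef : M.toBlocks₂₂.PosDef := by
    rw [hRhat]
    refine PosDef.posSemidef_add ?_ (hR.conjTranspose_mul_mul_same hC)
    simpa [conjTranspose_eq_transpose_of_trivial, Matrix.mul_assoc] using
      hQ.conjTranspose_mul_mul_same (N₁ * J)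
  have hM_posSemidef : M.PosSemidef :=
    hMY ▸ (hQ.fromBlocks_zero hR.posSemidef).conjTranspose_mul_mul_same _
  exact ⟨hRhat, hRhat_posDef, hM_posSemidef.schur_complement_toBlocks₂₂ hRhat_posDef⟩
end

section
/- For a real number $x$, the equation $x^3 + 3x^2 - 1 = 0$ holds if and only if $x = 2\cos\frac{2\pi}{9} - 1$, or $x = 2\cos\frac{4\pi}{9} - 1$, or $x = 2\cos\frac{8\pi}{9} - 1$. Moreover, among these three roots, $2\cos\frac{2\pi}{9} - 1$ is the unique nonnegative one: $2\cos\frac{2\pi}{9} - 1 \ge 0$, while $2\cos\frac{4\pi}{9} - 1 < 0$ and $2\cos\frac{8\pi}{9} - 1 < 0$. -/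
open Real

lemma root_of_cos (θ : ℝ) (h : Real.cos (3 * θ) = -(1/2)) :
    (2 * Real.cos θ - 1) ^ 3 + 3 * (2 * Real.cos θ - 1) ^ 2 - 1 = 0 := by
  have h3 := Real.cos_three_mul θ
  linear_combination 2 * (h3.symm.trans h)

/-- **Cardano roots of `x³ + 3x² − 1 = 0`.**
A real number `x` satisfies `x³ + 3x² − 1 = 0` iff `x` is one of
`2 cos(2π/9) − 1`, `2 cos(4π/9) − 1`, `2 cos(8π/9) − 1`; among these,
`2 cos(2π/9) − 1` is the unique nonnegative root. -/
theorem cubic_roots_cos (x : ℝ) :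
    (x ^ 3 + 3 * x ^ 2 - 1 = 0 ↔
      x = 2 * Real.cos (2 * π / 9) - 1 ∨
      x = 2 * Real.cos (4 * π / 9) - 1 ∨
      x = 2 * Real.cos (8 * π / 9) - 1) ∧
    0 ≤ 2 * Real.cos (2 * π / 9) - 1 ∧
    2 * Real.cos (4 * π / 9) - 1 < 0 ∧
    2 * Real.cos (8 * π / 9) - 1 < 0 := by
  have hpi := Real.pi_pos
  set a := 2 * Real.cos (2 * π / 9) - 1 with ha_def
  set b := 2 * Real.cos (4 * π / 9) - 1 with hb_def
  set c := 2 * Real.cos (8 * π / 9) - 1 with hc_def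
  -- cos(2π/3) = -1/2
  have h23 : Real.cos (2 * π / 3) = -(1/2) := by
    rw [show (2 * π / 3 : ℝ) = π - π / 3 by ring, Real.cos_pi_sub, Real.cos_pi_div_three]
  -- the three values are roots
  have ha : a ^ 3 + 3 * a ^ 2 - 1 = 0 := by
    apply root_of_cos
    rw [show (3 * (2 * π / 9) : ℝ) = 2 * π / 3 by ring]; exact h23
  have hb : b ^ 3 + 3 * b ^ 2 - 1 = 0 := by
    apply root_of_cos
    rw [show (3 * (4 * π / 9) : ℝ) = -(2 * π / 3) + 2 * π by ring,
      Real.cos_add_two_pi, Real.cos_neg]; exact h23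
  have hc : c ^ 3 + 3 * c ^ 2 - 1 = 0 := by
    apply root_of_cos
    rw [show (3 * (8 * π / 9) : ℝ) = 2 * π / 3 + 2 * π by ring,
      Real.cos_add_two_pi]; exact h23
  -- monotonicity facts for cos
  have h12 : Real.cos (4 * π / 9) < Real.cos (2 * π / 9) := by
    apply Real.cos_lt_cos_of_nonneg_of_le_pi (by positivity) (by linarith) (by linarith)
  have h23' : Real.cos (8 * π / 9) < Real.cos (4 * π / 9) := by
    apply Real.cos_lt_cos_of_nonneg_of_le_pi (by positivity) (by linarith) (by linarith)
  have hlow : Real.cos (π / 3) < Real.cos (2 * π / 9) := by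
    apply Real.cos_lt_cos_of_nonneg_of_le_pi (by positivity) (by linarith) (by linarith)
  have hmid : Real.cos (4 * π / 9) < Real.cos (π / 3) := by
    apply Real.cos_lt_cos_of_nonneg_of_le_pi (by positivity) (by linarith) (by linarith)
  rw [Real.cos_pi_div_three] at hlow hmid
  have hab : a ≠ b := by simp only [ha_def, hb_def]; intro h; nlinarith
  have hbc : b ≠ c := by simp only [hb_def, hc_def]; intro h; nlinarith
  refine ⟨⟨fun hx => ?_, fun hx => ?_⟩, by simp only [ha_def]; linarith,
    by simp only [hb_def]; linarith, by simp only [hc_def]; nlinarith⟩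
  · -- forward: factor out roots one by one
    have h1 : (x - a) * (x ^ 2 + (3 + a) * x + (a ^ 2 + 3 * a)) = 0 := by
      linear_combination hx - ha
    rcases mul_eq_zero.1 h1 with h | hq
    · exact Or.inl (by linarith)
    · have hqb : b ^ 2 + (3 + a) * b + (a ^ 2 + 3 * a) = 0 := by
        have : (b - a) * (b ^ 2 + (3 + a) * b + (a ^ 2 + 3 * a)) = 0 := by
          linear_combination hb - ha
        rcases mul_eq_zero.1 this with h | h
        · exact absurd (by linarith : a = b) hab
        · exact h
      have hqc : c ^ 2 + (3 + a) * c + (a ^ 2 + 3 * a) = 0 := by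
        have : (c - a) * (c ^ 2 + (3 + a) * c + (a ^ 2 + 3 * a)) = 0 := by
          linear_combination hc - ha
        rcases mul_eq_zero.1 this with h | h
        · exact absurd (by nlinarith : a = c) (fun h => by
            have : Real.cos (8 * π / 9) < Real.cos (2 * π / 9) := lt_trans h23' h12
            simp only [ha_def, hc_def] at h; nlinarith)
        · exact h
      -- c is root of quadratic; other root of quadratic besides b is -(a+b+3)
      have hc' : c = -(a + b + 3) := by
        have h2 : (c - b) * (c + b + 3 + a) = 0 := by linear_combination hqc - hqb
        rcases mul_eq_zero.1 h2 with h | h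
        · exact absurd (by linarith : b = c) hbc
        · linarith
      have h2 : (x - b) * (x + b + 3 + a) = 0 := by linear_combination hq - hqb
      rcases mul_eq_zero.1 h2 with h | h
      · exact Or.inr (Or.inl (by linarith))
      · exact Or.inr (Or.inr (by linarith))
  · rcases hx with h | h | h <;> rw [h] <;> [exact ha; exact hb; exact hc]
end
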